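/- arXiv:2511.21836 — 2 statements merged into one kernel-verified Lean document; each statement's English description precedes it below -/
import Mathlib

section
/- Exposure probability restriction under sharp no waning of the placebo. Assume, for a = 0, the hypotheses of the second-interval incidence decomposition (Consistency, Exposure necessity, Exclusion restriction, Treatment exchangeability, Positivity, Exposure exchangeability, Extended exposure exchangeability, 0 < P(E1[0]=1) < 1, P(E1[0]=1, Y1[0,1]=0) > 0), together with sharp no waning of the placebo (Y1[0,1] = Y2[0,1] a.s.), E[Y1[0,1]] > 0 and E[ΔY2 | A=0] > 0. Write p1 := P(E1[0]=1) and q0 := P(E2[0,0]=1 | E1[0]=0). Then E[ΔY1 | A=0] / E[ΔY2 | A=0] = p1 / (q0 · (1 − p1)). -/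
/-!
On the placebo arm, consistency and exposure necessity express the observed outcomes through
potential outcomes: almost surely `ΔY1 = 1{E1[0] = 1} · Y1[0,1]` and
`ΔY2 = 1{E1[0] = 0, E2[0,0] = 1} · Y2[0,1]`; an exposed subject without an interval-1 event has
`Y1[0,1] = 0`, hence `W[0,1] = Y2[0,1] = 0` by exclusion and no waning. Treatment exchangeability
turns the means over the arm into population means, and exposure exchangeability factorises them:
`E[ΔY1 | A = 0] = p1 · E[Y1[0,1]]` and
`E[ΔY2 | A = 0] = P(E1[0] = 0, E2[0,0] = 1) · E[Y2[0,1]] = q0 (1 - p1) · E[Y1[0,1]]`.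
The common factor `E[Y1[0,1]] > 0` cancels in the ratio.
-/

open MeasureTheory ProbabilityTheory
open scoped ProbabilityTheory

namespace ProbabilityTheory

variable {Ω β γ : Type*} {mΩ : MeasurableSpace Ω} [MeasurableSpace β] [MeasurableSpace γ]
  {μ : Measure Ω}

lemma IndepFun.setIntegral_preimage_eq_mul {Z : Ω → β} {F : Ω → ℝ} (h : IndepFun Z F μ)
    (hZ : Measurable Z) (hF : AEMeasurable F μ) {s : Set β} (hs : MeasurableSet s) :
    ∫ ω in Z ⁻¹' s, F ω ∂μ = μ.real (Z ⁻¹' s) * ∫ ω, F ω ∂μ :=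
  Indep.setIntegral_eq_mul (X := F) (f := id) hZ.comap_le h hF ⟨s, hs, rfl⟩
    aestronglyMeasurable_id

lemma measureReal_mul_setIntegral_cond [IsFiniteMeasure μ] {s : Set Ω} (hs : MeasurableSet s)
    (t : Set Ω) (f : Ω → ℝ) :
    μ.real t * ∫ ω in s, f ω ∂μ[|t] = ∫ ω in s ∩ t, f ω ∂μ := by
  rw [ProbabilityTheory.cond, Measure.restrict_smul, Measure.restrict_restrict hs,
    integral_smul_measure, smul_eq_mul, ← mul_assoc, ENNReal.toReal_inv, ← measureReal_def]
  rcases eq_or_ne (μ.real t) 0 with ht | ht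
  · rw [Measure.restrict_eq_zero.mpr
      (measure_inter_null_of_null_right s ((measureReal_eq_zero_iff).mp ht))]
    simp
  · rw [mul_inv_cancel₀ ht, one_mul]

lemma measureReal_mul_integral_cond [IsFiniteMeasure μ] (t : Set Ω) (f : Ω → ℝ) :
    μ.real t * ∫ ω, f ω ∂μ[|t] = ∫ ω in t, f ω ∂μ := by
  simpa using measureReal_mul_setIntegral_cond MeasurableSet.univ t f

lemma integral_cond_preimage_eq_of_indepFun [IsFiniteMeasure μ] {Z : Ω → β} {F : Ω → ℝ}
    (h : IndepFun Z F μ) (hZ : Measurable Z) (hF : AEMeasurable F μ) {s : Set β}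
    (hs : MeasurableSet s) (hne : μ (Z ⁻¹' s) ≠ 0) :
    ∫ ω, F ω ∂μ[|Z ⁻¹' s] = ∫ ω, F ω ∂μ := by
  apply mul_left_cancel₀ ((measureReal_ne_zero_iff).mpr hne)
  rw [measureReal_mul_integral_cond, h.setIntegral_preimage_eq_mul hZ hF hs]

lemma cond_real_mul_measureReal [IsFiniteMeasure μ] {s : Set Ω} (hs : MeasurableSet s)
    (t : Set Ω) : μ[|s].real t * μ.real s = μ.real (s ∩ t) := by
  rw [measureReal_def, measureReal_def, measureReal_def, ← ENNReal.toReal_mul,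
    cond_mul_eq_inter hs]

lemma setIntegral_inter_preimage_eq_mul [IsFiniteMeasure μ] {X : Ω → β} {Z : Ω → γ}
    {F : Ω → ℝ} (hX : Measurable X) (hZ : Measurable Z) (hF : AEMeasurable F μ)
    {s : Set β} {t : Set γ} (hs : MeasurableSet s) (ht : MeasurableSet t)
    (hZF : IndepFun Z F μ) (hXF : IndepFun X F μ[|Z ⁻¹' t]) :
    ∫ ω in X ⁻¹' s ∩ Z ⁻¹' t, F ω ∂μ = μ.real (X ⁻¹' s ∩ Z ⁻¹' t) * ∫ ω, F ω ∂μ := by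
  calc ∫ ω in X ⁻¹' s ∩ Z ⁻¹' t, F ω ∂μ
      = μ.real (Z ⁻¹' t) * ∫ ω in X ⁻¹' s, F ω ∂μ[|Z ⁻¹' t] :=
        (measureReal_mul_setIntegral_cond (hX hs) _ F).symm
    _ = μ[|Z ⁻¹' t].real (X ⁻¹' s) * ∫ ω in Z ⁻¹' t, F ω ∂μ := by
        rw [hXF.setIntegral_preimage_eq_mul hX (hF.mono_ac cond_absolutelyContinuous) hs,
          ← measureReal_mul_integral_cond]
        ring
    _ = μ.real (X ⁻¹' s ∩ Z ⁻¹' t) * ∫ ω, F ω ∂μ := by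
        rw [hZF.setIntegral_preimage_eq_mul hZ hF ht, ← mul_assoc,
          cond_real_mul_measureReal (hZ ht), Set.inter_comm]

lemma integral_cond_eq_of_indepFun_of_ae_eq [IsFiniteMeasure μ] [MeasurableSingletonClass β]
    {A : Ω → β} {V : Ω → γ} {g : γ → ℝ} {D : Ω → ℝ} (hAV : IndepFun A V μ) (hA : Measurable A)
    (hg : Measurable g) (hgV : AEMeasurable (fun ω => g (V ω)) μ)
    {a : β} (ha : μ {ω | A ω = a} ≠ 0)
    (hD : ∀ᵐ ω ∂μ, A ω = a → D ω = g (V ω)) :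
    ∫ ω, D ω ∂μ[|{ω | A ω = a}] = ∫ ω, g (V ω) ∂μ := by
  have hDg : ∀ᵐ ω ∂μ[|{ω | A ω = a}], D ω = g (V ω) := by
    filter_upwards [cond_absolutelyContinuous.ae_le hD,
      ae_cond_mem (hA (measurableSet_singleton a))] with ω hω hωa using hω hωa
  rw [integral_congr_ae hDg]
  exact integral_cond_preimage_eq_of_indepFun (hAV.comp measurable_id hg) hA hgV
    (measurableSet_singleton a) ha

end ProbabilityTheory

section TreatmentArm

variable {Ω : Type*} {mΩ : MeasurableSpace Ω} {μ : Measure Ω} {A E1 E2 DY1 DY2 : Ω → ℝ} {a : ℝ}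

lemma setOf_eq_zero_eq_compl {X : Ω → ℝ} (hX : ∀ ω, X ω = 0 ∨ X ω = 1) :
    {ω | X ω = 0} = {ω | X ω = 1}ᶜ := by
  ext ω
  rcases hX ω with h | h <;> simp [h]

lemma deltaY1_ae_eq_indicator_on_arm {E1a Y10 Y11 : Ω → ℝ}
    (hE1r : ∀ ω, E1 ω = 0 ∨ E1 ω = 1)
    (hE1 : ∀ᵐ ω ∂μ, A ω = a → E1 ω = E1a ω)
    (hY10 : ∀ᵐ ω ∂μ, A ω = a → E1 ω = 0 → DY1 ω = Y10 ω)
    (hY11 : ∀ᵐ ω ∂μ, A ω = a → E1 ω = 1 → DY1 ω = Y11 ω)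
    (hnec : ∀ᵐ ω ∂μ, Y10 ω = 0) :
    ∀ᵐ ω ∂μ, A ω = a → DY1 ω = {ω | E1a ω = 1}.indicator Y11 ω := by
  filter_upwards [hE1, hY10, hY11, hnec] with ω hE1 hY10 hY11 hnec hA
  rcases hE1r ω with h | h
  · have : E1a ω ≠ 1 := by rw [← hE1 hA, h]; norm_num
    simp [Set.indicator_of_notMem, this, hY10 hA h, hnec]
  · have : E1a ω = 1 := by rw [← hE1 hA, h]
    simp [this, hY11 hA h]

lemma deltaY2_ae_eq_indicator_on_arm {E1a E20 Y11 Y21 W1 : Ω → ℝ}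
    (hE1r : ∀ ω, E1 ω = 0 ∨ E1 ω = 1) (hE2r : ∀ ω, E2 ω = 0 ∨ E2 ω = 1)
    (hDY1r : ∀ ω, DY1 ω = 0 ∨ DY1 ω = 1) (hmono : ∀ ω, DY1 ω = 1 → DY2 ω = 0)
    (hE1 : ∀ᵐ ω ∂μ, A ω = a → E1 ω = E1a ω)
    (hY11 : ∀ᵐ ω ∂μ, A ω = a → E1 ω = 1 → DY1 ω = Y11 ω)
    (hE20 : ∀ᵐ ω ∂μ, A ω = a → E1 ω = 0 → E2 ω = E20 ω)
    (hY21 : ∀ᵐ ω ∂μ, A ω = a → E1 ω = 0 → E2 ω = 1 → DY2 ω = Y21 ω)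
    (hW1 : ∀ᵐ ω ∂μ, A ω = a → E1 ω = 1 → DY1 ω = 0 → E2 ω = 1 → DY2 ω = W1 ω)
    (hnecE2 : ∀ᵐ ω ∂μ, E2 ω = 0 → DY2 ω = 0)
    (hexcl : ∀ᵐ ω ∂μ, W1 ω = Y21 ω) (hwane : ∀ᵐ ω ∂μ, Y11 ω = Y21 ω) :
    ∀ᵐ ω ∂μ, A ω = a → DY2 ω = ({ω | E1a ω = 0} ∩ {ω | E20 ω = 1}).indicator Y21 ω := by
  filter_upwards [hE1, hY11, hE20, hY21, hW1, hnecE2, hexcl, hwane]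
    with ω hE1 hY11 hE20 hY21 hW1 hnecE2 hexcl hwane hA
  rcases hE1r ω with h | h
  · have hE1a : E1a ω = 0 := by rw [← hE1 hA, h]
    rcases hE2r ω with h2 | h2
    · have : E20 ω ≠ 1 := by rw [← hE20 hA h, h2]; norm_num
      simp [hnecE2 h2, this]
    · have : E20 ω = 1 := by rw [← hE20 hA h, h2]
      simp [hY21 hA h h2, hE1a, this]
  · have hE1a : E1a ω ≠ 0 := by rw [← hE1 hA, h]; norm_num
    rw [Set.indicator_of_notMem (by simp [hE1a])]
    rcases hDY1r ω with hd | hd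
    · rcases hE2r ω with h2 | h2
      · exact hnecE2 h2
      -- an interval-1 non-event forces `Y1[a,1] = 0`, which no waning transfers to interval 2
      · rw [hW1 hA h hd h2, hexcl, ← hwane, ← hY11 hA h, hd]
    · exact hmono ω hd

end TreatmentArm

theorem exposure_probability_restriction_general
    {Ω : Type*} [MeasurableSpace Ω] (μ : Measure Ω) [IsProbabilityMeasure μ]
    (A E1 E2 DY1 DY2 : Ω → ℝ)
    (E1p : ℝ → Ω → ℝ) (E2p Y1p Y2p Wp : ℝ → ℝ → Ω → ℝ)
    (hAm : Measurable A)
    (hE1pm : ∀ a ∈ ({0, 1} : Set ℝ), Measurable (E1p a))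
    (hE2pm : ∀ a ∈ ({0, 1} : Set ℝ), ∀ e1 ∈ ({0, 1} : Set ℝ), Measurable (E2p a e1))
    (hY1pm : ∀ a ∈ ({0, 1} : Set ℝ), ∀ e1 ∈ ({0, 1} : Set ℝ), Measurable (Y1p a e1))
    (hY2pm : ∀ a ∈ ({0, 1} : Set ℝ), ∀ e2 ∈ ({0, 1} : Set ℝ), Measurable (Y2p a e2))
    (hAr : ∀ ω, A ω = 0 ∨ A ω = 1) (hE1r : ∀ ω, E1 ω = 0 ∨ E1 ω = 1)
    (hE2r : ∀ ω, E2 ω = 0 ∨ E2 ω = 1)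
    (hDY1r : ∀ ω, DY1 ω = 0 ∨ DY1 ω = 1)
    (hE1pr : ∀ a ∈ ({0, 1} : Set ℝ), ∀ ω, E1p a ω = 0 ∨ E1p a ω = 1)
    (hmono : ∀ ω, DY1 ω = 1 → DY2 ω = 0)
    -- Consistency
    (hconsE1 : ∀ a ∈ ({0, 1} : Set ℝ), ∀ᵐ ω ∂μ, A ω = a → E1 ω = E1p a ω)
    (hconsY1 : ∀ a ∈ ({0, 1} : Set ℝ), ∀ e1 ∈ ({0, 1} : Set ℝ),
      ∀ᵐ ω ∂μ, A ω = a → E1 ω = e1 → DY1 ω = Y1p a e1 ω)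
    (hconsE2 : ∀ a ∈ ({0, 1} : Set ℝ), ∀ e1 ∈ ({0, 1} : Set ℝ),
      ∀ᵐ ω ∂μ, A ω = a → E1 ω = e1 → E2 ω = E2p a e1 ω)
    (hconsY2 : ∀ a ∈ ({0, 1} : Set ℝ), ∀ e2 ∈ ({0, 1} : Set ℝ),
      ∀ᵐ ω ∂μ, A ω = a → E1 ω = 0 → E2 ω = e2 → DY2 ω = Y2p a e2 ω)
    (hconsW : ∀ a ∈ ({0, 1} : Set ℝ), ∀ e1 ∈ ({0, 1} : Set ℝ),
      ∀ᵐ ω ∂μ, A ω = a → E1 ω = e1 → DY1 ω = 0 → E2 ω = 1 → DY2 ω = Wp a e1 ω)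
    -- Exposure necessity
    (hnecY1 : ∀ a ∈ ({0, 1} : Set ℝ), ∀ᵐ ω ∂μ, Y1p a 0 ω = 0)
    (hnecE2 : ∀ᵐ ω ∂μ, E2 ω = 0 → DY2 ω = 0)
    -- Exclusion restriction
    (hexcl : ∀ a ∈ ({0, 1} : Set ℝ), ∀ᵐ ω ∂μ, Wp a 1 ω = Y2p a 1 ω ∧ Wp a 0 ω = Y2p a 1 ω)
    -- Treatment exchangeability
    (hexch : IndepFun A (fun ω => ![E1p 0 ω, E1p 1 ω,
      E2p 0 0 ω, E2p 0 1 ω, E2p 1 0 ω, E2p 1 1 ω,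
      Y1p 0 0 ω, Y1p 0 1 ω, Y1p 1 0 ω, Y1p 1 1 ω,
      Y2p 0 0 ω, Y2p 0 1 ω, Y2p 1 0 ω, Y2p 1 1 ω,
      Wp 0 0 ω, Wp 0 1 ω, Wp 1 0 ω, Wp 1 1 ω]) μ)
    -- Positivity
    (hpos : 0 < (μ {ω | A ω = 1}).toReal ∧ (μ {ω | A ω = 1}).toReal < 1)
    -- Exposure exchangeability
    (heeY1 : ∀ a ∈ ({0, 1} : Set ℝ), ∀ e1 ∈ ({0, 1} : Set ℝ), IndepFun (E1p a) (Y1p a e1) μ)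
    (heeY2cond : ∀ a ∈ ({0, 1} : Set ℝ), ∀ e2 ∈ ({0, 1} : Set ℝ), ∀ e ∈ ({0, 1} : Set ℝ),
      IndepFun (E1p a) (Y2p a e2) (μ[|{ω | E2p a 0 ω = e}]))
    (heeE2 : ∀ a ∈ ({0, 1} : Set ℝ), ∀ e2 ∈ ({0, 1} : Set ℝ), IndepFun (E2p a 0) (Y2p a e2) μ)
    -- Sharp no waning of the placebo
    (hnull0 : ∀ᵐ ω ∂μ, Y1p 0 1 ω = Y2p 0 1 ω)
    (hd4 : 0 < ∫ ω, Y1p 0 1 ω ∂μ)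
    (p1 q0 : ℝ)
    (hp1 : p1 = (μ {ω | E1p 0 ω = 1}).toReal)
    (hq0 : q0 = ((μ[|{ω | E1p 0 ω = 0}]) {ω | E2p 0 0 ω = 1}).toReal) :
    (∫ ω, DY1 ω ∂(μ[|{ω | A ω = 0}])) / (∫ ω, DY2 ω ∂(μ[|{ω | A ω = 0}])) =
      p1 / (q0 * (1 - p1)) := by
  have h0 : (0 : ℝ) ∈ ({0, 1} : Set ℝ) := by simp
  have h1 : (1 : ℝ) ∈ ({0, 1} : Set ℝ) := by simp
  have hA0 : μ {ω | A ω = 0} ≠ 0 := by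
    have hA1 : MeasurableSet {ω | A ω = 1} := hAm (measurableSet_singleton 1)
    rw [setOf_eq_zero_eq_compl hAr, Ne, prob_compl_eq_zero_iff hA1]
    intro h
    simp [h] at hpos
  have hY1 : Measurable (Y1p 0 1) := hY1pm 0 h0 1 h1
  have hY2 : Measurable (Y2p 0 1) := hY2pm 0 h0 1 h1
  have hS1 : MeasurableSet {ω | E1p 0 ω = 1} := hE1pm 0 h0 (measurableSet_singleton 1)
  have hS0 : MeasurableSet {ω | E1p 0 ω = 0} := hE1pm 0 h0 (measurableSet_singleton 0)
  have hT : MeasurableSet {ω | E2p 0 0 ω = 1} := hE2pm 0 h0 0 h0 (measurableSet_singleton 1)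
  have hunexposed : μ.real {ω | E1p 0 ω = 0} = 1 - p1 := by
    rw [setOf_eq_zero_eq_compl (hE1pr 0 h0), probReal_compl_eq_one_sub hS1, hp1, measureReal_def]
  -- coordinates 0, 2, 7, 11 of the vector in `hexch` are `E1[0]`, `E2[0,0]`, `Y1[0,1]`, `Y2[0,1]`
  have hDY1 : ∫ ω, DY1 ω ∂μ[|{ω | A ω = 0}] = p1 * ∫ ω, Y1p 0 1 ω ∂μ := by
    calc ∫ ω, DY1 ω ∂μ[|{ω | A ω = 0}]
        = ∫ ω, {ω | E1p 0 ω = 1}.indicator (Y1p 0 1) ω ∂μ :=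
          integral_cond_eq_of_indepFun_of_ae_eq hexch hAm
            (g := {v : Fin 18 → ℝ | v 0 = 1}.indicator (fun v => v 7))
            ((measurable_pi_apply 7).indicator (measurable_pi_apply 0 (measurableSet_singleton 1)))
            (hY1.indicator hS1).aemeasurable hA0
            (deltaY1_ae_eq_indicator_on_arm hE1r (hconsE1 0 h0) (hconsY1 0 h0 0 h0)
              (hconsY1 0 h0 1 h1) (hnecY1 0 h0))
      _ = ∫ ω in {ω | E1p 0 ω = 1}, Y1p 0 1 ω ∂μ := integral_indicator hS1
      _ = p1 * ∫ ω, Y1p 0 1 ω ∂μ := by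
          rw [hp1]
          exact (heeY1 0 h0 1 h1).setIntegral_preimage_eq_mul (hE1pm 0 h0) hY1.aemeasurable
            (measurableSet_singleton 1)
  have hDY2 : ∫ ω, DY2 ω ∂μ[|{ω | A ω = 0}] = q0 * (1 - p1) * ∫ ω, Y1p 0 1 ω ∂μ := by
    calc ∫ ω, DY2 ω ∂μ[|{ω | A ω = 0}]
        = ∫ ω, ({ω | E1p 0 ω = 0} ∩ {ω | E2p 0 0 ω = 1}).indicator (Y2p 0 1) ω ∂μ :=
          integral_cond_eq_of_indepFun_of_ae_eq hexch hAm
            (g := ({v : Fin 18 → ℝ | v 0 = 0} ∩ {v | v 2 = 1}).indicator (fun v => v 11))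
            ((measurable_pi_apply 11).indicator
              ((measurable_pi_apply 0 (measurableSet_singleton 0)).inter
                (measurable_pi_apply 2 (measurableSet_singleton 1))))
            (hY2.indicator (hS0.inter hT)).aemeasurable hA0
            (deltaY2_ae_eq_indicator_on_arm hE1r hE2r hDY1r hmono (hconsE1 0 h0)
              (hconsY1 0 h0 1 h1) (hconsE2 0 h0 0 h0) (hconsY2 0 h0 1 h1) (hconsW 0 h0 1 h1)
              hnecE2 ((hexcl 0 h0).mono fun _ h => h.1) hnull0)
      _ = ∫ ω in {ω | E1p 0 ω = 0} ∩ {ω | E2p 0 0 ω = 1}, Y2p 0 1 ω ∂μ :=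
          integral_indicator (hS0.inter hT)
      _ = μ.real ({ω | E1p 0 ω = 0} ∩ {ω | E2p 0 0 ω = 1}) * ∫ ω, Y2p 0 1 ω ∂μ :=
          setIntegral_inter_preimage_eq_mul (hE1pm 0 h0) (hE2pm 0 h0 0 h0) hY2.aemeasurable
            (measurableSet_singleton 0) (measurableSet_singleton 1) (heeE2 0 h0 1 h1)
            (heeY2cond 0 h0 1 h1 1 h1)
      _ = q0 * (1 - p1) * ∫ ω, Y1p 0 1 ω ∂μ := by
          rw [hq0, ← hunexposed, ← measureReal_def, cond_real_mul_measureReal hS0,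
            integral_congr_ae (hnull0.mono fun _ h => h.symm)]
  rw [hDY1, hDY2, mul_div_mul_right _ _ hd4.ne']

/-- Exposure probability restriction under sharp no waning of the placebo. -/
theorem exposure_probability_restriction
    {Ω : Type*} [MeasurableSpace Ω] (μ : Measure Ω) [IsProbabilityMeasure μ]
    (A E1 E2 DY1 DY2 : Ω → ℝ)
    (E1p : ℝ → Ω → ℝ) (E2p Y1p Y2p Wp : ℝ → ℝ → Ω → ℝ)
    (hAm : Measurable A) (hE1m : Measurable E1) (hE2m : Measurable E2)
    (hDY1m : Measurable DY1) (hDY2m : Measurable DY2)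
    (hE1pm : ∀ a ∈ ({0, 1} : Set ℝ), Measurable (E1p a))
    (hE2pm : ∀ a ∈ ({0, 1} : Set ℝ), ∀ e1 ∈ ({0, 1} : Set ℝ), Measurable (E2p a e1))
    (hY1pm : ∀ a ∈ ({0, 1} : Set ℝ), ∀ e1 ∈ ({0, 1} : Set ℝ), Measurable (Y1p a e1))
    (hY2pm : ∀ a ∈ ({0, 1} : Set ℝ), ∀ e2 ∈ ({0, 1} : Set ℝ), Measurable (Y2p a e2))
    (hWpm : ∀ a ∈ ({0, 1} : Set ℝ), ∀ e1 ∈ ({0, 1} : Set ℝ), Measurable (Wp a e1))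
    (hAr : ∀ ω, A ω = 0 ∨ A ω = 1) (hE1r : ∀ ω, E1 ω = 0 ∨ E1 ω = 1)
    (hE2r : ∀ ω, E2 ω = 0 ∨ E2 ω = 1)
    (hDY1r : ∀ ω, DY1 ω = 0 ∨ DY1 ω = 1) (hDY2r : ∀ ω, DY2 ω = 0 ∨ DY2 ω = 1)
    (hE1pr : ∀ a ∈ ({0, 1} : Set ℝ), ∀ ω, E1p a ω = 0 ∨ E1p a ω = 1)
    (hE2pr : ∀ a ∈ ({0, 1} : Set ℝ), ∀ e1 ∈ ({0, 1} : Set ℝ), ∀ ω,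
      E2p a e1 ω = 0 ∨ E2p a e1 ω = 1)
    (hY1pr : ∀ a ∈ ({0, 1} : Set ℝ), ∀ e1 ∈ ({0, 1} : Set ℝ), ∀ ω,
      Y1p a e1 ω = 0 ∨ Y1p a e1 ω = 1)
    (hY2pr : ∀ a ∈ ({0, 1} : Set ℝ), ∀ e2 ∈ ({0, 1} : Set ℝ), ∀ ω,
      Y2p a e2 ω = 0 ∨ Y2p a e2 ω = 1)
    (hWpr : ∀ a ∈ ({0, 1} : Set ℝ), ∀ e1 ∈ ({0, 1} : Set ℝ), ∀ ω,
      Wp a e1 ω = 0 ∨ Wp a e1 ω = 1)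
    (hmono : ∀ ω, DY1 ω = 1 → DY2 ω = 0)
    -- Consistency
    (hconsE1 : ∀ a ∈ ({0, 1} : Set ℝ), ∀ᵐ ω ∂μ, A ω = a → E1 ω = E1p a ω)
    (hconsY1 : ∀ a ∈ ({0, 1} : Set ℝ), ∀ e1 ∈ ({0, 1} : Set ℝ),
      ∀ᵐ ω ∂μ, A ω = a → E1 ω = e1 → DY1 ω = Y1p a e1 ω)
    (hconsE2 : ∀ a ∈ ({0, 1} : Set ℝ), ∀ e1 ∈ ({0, 1} : Set ℝ),
      ∀ᵐ ω ∂μ, A ω = a → E1 ω = e1 → E2 ω = E2p a e1 ω)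
    (hconsY2 : ∀ a ∈ ({0, 1} : Set ℝ), ∀ e2 ∈ ({0, 1} : Set ℝ),
      ∀ᵐ ω ∂μ, A ω = a → E1 ω = 0 → E2 ω = e2 → DY2 ω = Y2p a e2 ω)
    (hconsW : ∀ a ∈ ({0, 1} : Set ℝ), ∀ e1 ∈ ({0, 1} : Set ℝ),
      ∀ᵐ ω ∂μ, A ω = a → E1 ω = e1 → DY1 ω = 0 → E2 ω = 1 → DY2 ω = Wp a e1 ω)
    -- Exposure necessity
    (hnecY1 : ∀ a ∈ ({0, 1} : Set ℝ), ∀ᵐ ω ∂μ, Y1p a 0 ω = 0)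
    (hnecY2 : ∀ a ∈ ({0, 1} : Set ℝ), ∀ᵐ ω ∂μ, Y2p a 0 ω = 0)
    (hnecE2 : ∀ᵐ ω ∂μ, E2 ω = 0 → DY2 ω = 0)
    -- Exclusion restriction
    (hexcl : ∀ a ∈ ({0, 1} : Set ℝ), ∀ᵐ ω ∂μ, Wp a 1 ω = Y2p a 1 ω ∧ Wp a 0 ω = Y2p a 1 ω)
    -- Treatment exchangeability
    (hexch : IndepFun A (fun ω => ![E1p 0 ω, E1p 1 ω,
      E2p 0 0 ω, E2p 0 1 ω, E2p 1 0 ω, E2p 1 1 ω,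
      Y1p 0 0 ω, Y1p 0 1 ω, Y1p 1 0 ω, Y1p 1 1 ω,
      Y2p 0 0 ω, Y2p 0 1 ω, Y2p 1 0 ω, Y2p 1 1 ω,
      Wp 0 0 ω, Wp 0 1 ω, Wp 1 0 ω, Wp 1 1 ω]) μ)
    -- Positivity
    (hpos : 0 < (μ {ω | A ω = 1}).toReal ∧ (μ {ω | A ω = 1}).toReal < 1)
    -- Exposure exchangeability
    (heeY1 : ∀ a ∈ ({0, 1} : Set ℝ), ∀ e1 ∈ ({0, 1} : Set ℝ), IndepFun (E1p a) (Y1p a e1) μ)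
    (heeY2cond : ∀ a ∈ ({0, 1} : Set ℝ), ∀ e2 ∈ ({0, 1} : Set ℝ), ∀ e ∈ ({0, 1} : Set ℝ),
      IndepFun (E1p a) (Y2p a e2) (μ[|{ω | E2p a 0 ω = e}]))
    (heeE2 : ∀ a ∈ ({0, 1} : Set ℝ), ∀ e2 ∈ ({0, 1} : Set ℝ), IndepFun (E2p a 0) (Y2p a e2) μ)
    -- Extended exposure exchangeability
    (hextee1 : ∀ a ∈ ({0, 1} : Set ℝ), ∀ e ∈ ({0, 1} : Set ℝ),
      IndepFun (E1p a) (Wp a 1) (μ[|{ω | Y1p a 1 ω = 0 ∧ E2p a 1 ω = e}]))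
    (hextee2 : ∀ a ∈ ({0, 1} : Set ℝ),
      IndepFun (E2p a 1) (Wp a 1) (μ[|{ω | Y1p a 1 ω = 0}]))
    -- Nondegeneracy (for arm a = 0)
    (hE1pos : 0 < (μ {ω | E1p 0 ω = 1}).toReal)
    (hE1lt : (μ {ω | E1p 0 ω = 1}).toReal < 1)
    (hE1Y1 : 0 < (μ {ω | E1p 0 ω = 1 ∧ Y1p 0 1 ω = 0}).toReal)
    -- Sharp no waning of the placebo
    (hnull0 : ∀ᵐ ω ∂μ, Y1p 0 1 ω = Y2p 0 1 ω)
    (hd4 : 0 < ∫ ω, Y1p 0 1 ω ∂μ)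
    (hd2 : 0 < ∫ ω, DY2 ω ∂(μ[|{ω | A ω = 0}]))
    (p1 q0 : ℝ)
    (hp1 : p1 = (μ {ω | E1p 0 ω = 1}).toReal)
    (hq0 : q0 = ((μ[|{ω | E1p 0 ω = 0}]) {ω | E2p 0 0 ω = 1}).toReal) :
    (∫ ω, DY1 ω ∂(μ[|{ω | A ω = 0}])) / (∫ ω, DY2 ω ∂(μ[|{ω | A ω = 0}])) =
      p1 / (q0 * (1 - p1)) :=
  exposure_probability_restriction_general μ A E1 E2 DY1 DY2 E1p E2p Y1p Y2p Wp hAm hE1pm hE2pm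
    hY1pm hY2pm hAr hE1r hE2r hDY1r hE1pr hmono hconsE1 hconsY1 hconsE2 hconsY2 hconsW hnecY1 hnecE2
    hexcl hexch hpos heeY1 heeY2cond heeE2 hnull0 hd4 p1 q0 hp1 hq0
end

section
/- Second-interval hazard ratio under the null in the explicit data-generating model. In the explicit model, assume 0 < q1 < 1, 0 < q2, πA ∈ (0,1), pd + ph < 1, pd + pr < 1, pd + ph > 0 and pd + pr > 0 (so all conditional expectations below are well defined). Then the second-interval hazard ratio satisfies HR2 := E[ΔY2 | ΔY1 = 0, A = 1] / E[ΔY2 | ΔY1 = 0, A = 0] = ((pd + pr)/(pd + ph)) · ((1 − (pd + ph))·q1 + (1 − q1)) / ((1 − (pd + pr))·q1 + (1 − q1)). In particular, even though the principal strata are constant over time (the sharp null of no waning holds by construction), HR2 differs from the first-interval hazard ratio HR1 := E[ΔY1 | A = 1]/E[ΔY1 | A = 0] = (pd + pr)/(pd + ph) by the factor ((1 − (pd + ph))·q1 + (1 − q1)) / ((1 − (pd + pr))·q1 + (1 − q1)). -/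
/-!
In arm `A = a` the outcome indicator `f(T, a)` is the indicator of `T ∈ S_a`, with responder
set `S_1 = {1, 3}` and `S_0 = {1, 2}` of probability `r_a`. Hence `ΔY1` is the indicator of
`{E1 = 1, T ∈ S_a}` and independence gives `E[ΔY1 | A = a] = q1 r_a`. Those still event-free
after interval 1 are the unexposed or the non-responders, of probability
`(1 - r_a) q1 + (1 - q1)`; on them `E2 = B2`, so `ΔY2` is the indicator of `{B2 = 1, T ∈ S_a}`,
and only the unexposed responders contribute:
`E[ΔY2 | ΔY1 = 0, A = a] = r_a (1 - q1) q2 / ((1 - r_a) q1 + (1 - q1))`.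
The extra factor in `HR2` is the ratio of the two arms' event-free probabilities.
-/

open MeasureTheory ProbabilityTheory Set

lemma integral_cond_eq_measureReal_inter_div {Ω : Type*} [MeasurableSpace Ω] {μ : Measure Ω}
    [IsFiniteMeasure μ] {f : Ω → ℝ} {s G : Set Ω} (hs : MeasurableSet s) (hG : MeasurableSet G)
    (hf : EqOn f (G.indicator 1) s) :
    ∫ ω, f ω ∂μ[|s] = μ.real (s ∩ G) / μ.real s := by
  rw [integral_congr_ae ((ae_cond_mem hs).mono hf), integral_indicator_one hG,
    measureReal_def, cond_apply hs, ENNReal.toReal_mul, ENNReal.toReal_inv, inv_mul_eq_div]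
  rfl

lemma ProbabilityTheory.iIndepFun.measureReal_inter_preimage_four {Ω β : Type*}
    [MeasurableSpace Ω] [MeasurableSpace β] {μ : Measure Ω} {X₀ X₁ X₂ X₃ : Ω → β}
    (h : iIndepFun ![X₀, X₁, X₂, X₃] μ) {s₀ s₁ s₂ s₃ : Set β} (h₀ : MeasurableSet s₀)
    (h₁ : MeasurableSet s₁) (h₂ : MeasurableSet s₂) (h₃ : MeasurableSet s₃) :
    μ.real (X₀ ⁻¹' s₀ ∩ X₁ ⁻¹' s₁ ∩ X₂ ⁻¹' s₂ ∩ X₃ ⁻¹' s₃) =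
      μ.real (X₀ ⁻¹' s₀) * μ.real (X₁ ⁻¹' s₁) * μ.real (X₂ ⁻¹' s₂) * μ.real (X₃ ⁻¹' s₃) := by
  have key := h.measure_inter_preimage_eq_mul Finset.univ (sets := ![s₀, s₁, s₂, s₃])
    (fun i _ => by fin_cases i <;> assumption)
  have hinter : ⋂ i, ![X₀, X₁, X₂, X₃] i ⁻¹' ![s₀, s₁, s₂, s₃] i =
      X₀ ⁻¹' s₀ ∩ X₁ ⁻¹' s₁ ∩ X₂ ⁻¹' s₂ ∩ X₃ ⁻¹' s₃ := by
    ext ω; simp [Fin.forall_fin_succ, and_assoc]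
  simp only [Finset.mem_univ, iInter_true, Fin.prod_univ_four, hinter] at key
  simp [measureReal_def, key, ENNReal.toReal_mul]

lemma measureReal_preimage_pair {Ω : Type*} [MeasurableSpace Ω] {μ : Measure Ω}
    [IsFiniteMeasure μ] {X : Ω → ℝ} (hX : Measurable X) {a b : ℝ} (hab : a ≠ b) :
    μ.real (X ⁻¹' {a, b}) = μ.real (X ⁻¹' {a}) + μ.real (X ⁻¹' {b}) := by
  rw [insert_eq, preimage_union,
    measureReal_union ((disjoint_singleton.2 hab).preimage X) (hX (measurableSet_singleton b))]

lemma measureReal_preimage_zero_eq_one_sub {Ω : Type*} [MeasurableSpace Ω] {μ : Measure Ω}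
    [IsProbabilityMeasure μ] {X : Ω → ℝ} (hX : Measurable X) (hX01 : ∀ ω, X ω = 0 ∨ X ω = 1) :
    μ.real (X ⁻¹' {0}) = 1 - μ.real (X ⁻¹' {1}) := by
  have : X ⁻¹' {0} = (X ⁻¹' {1})ᶜ := by
    ext ω; rcases hX01 ω with h | h <;> simp [h]
  rw [this, probReal_compl_eq_one_sub (hX (measurableSet_singleton 1))]

lemma mul_div_div_mul_div_eq_div_mul_div {K : Type*} [Field K] {a b c d k : K} (hk : k ≠ 0) :
    a * k / b / (c * k / d) = a / c * (d / b) := by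
  rw [div_div_div_eq, div_mul_div_comm, mul_right_comm a k d, mul_comm b (c * k),
    mul_right_comm c k b, mul_div_mul_right _ _ hk]

/-- The paper's `f(t, a)`; the principal strata `t = 1, 2, 3, 4` are doomed, helped, harmed,
immune. -/
noncomputable def outcomeIfExposed (t a : ℝ) : ℝ :=
  (if t = 1 then 1 else 0) + (1 - a) * (if t = 2 then 1 else 0) + a * (if t = 3 then 1 else 0)

lemma outcomeIfExposed_one (t : ℝ) : outcomeIfExposed t 1 = ({1, 3} : Set ℝ).indicator 1 t := by
  by_cases h1 : t = 1 <;> by_cases h3 : t = 3 <;> simp_all [outcomeIfExposed, indicator]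

lemma outcomeIfExposed_zero (t : ℝ) : outcomeIfExposed t 0 = ({1, 2} : Set ℝ).indicator 1 t := by
  by_cases h1 : t = 1 <;> by_cases h2 : t = 2 <;> simp_all [outcomeIfExposed, indicator]

section Arm

variable {Ω : Type*} {A T E1 B2 DY1 E2 DY2 : Ω → ℝ} {a : ℝ} {S : Set ℝ}

lemma eqOn_indicator_of_binary_mul_indicator {X Y : Ω → ℝ} {s : Set Ω}
    (hX : ∀ ω, X ω = 0 ∨ X ω = 1) (hY : EqOn Y (fun ω => X ω * S.indicator 1 (T ω)) s) :
    EqOn Y ((X ⁻¹' {1} ∩ T ⁻¹' S).indicator 1) s := by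
  intro ω hω
  rw [hY hω]
  rcases hX ω with h | h <;> by_cases hT : T ω ∈ S <;> simp [h, hT, indicator]

lemma eqOn_dy1 (hE1r : ∀ ω, E1 ω = 0 ∨ E1 ω = 1)
    (hDY1 : ∀ ω, DY1 ω = E1 ω * outcomeIfExposed (T ω) (A ω))
    (hS : ∀ t, outcomeIfExposed t a = S.indicator 1 t) :
    EqOn DY1 ((E1 ⁻¹' {1} ∩ T ⁻¹' S).indicator 1) {ω | A ω = a} :=
  eqOn_indicator_of_binary_mul_indicator hE1r fun ω (hA : A ω = a) => by rw [hDY1, hA, hS]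

lemma setOf_dy1_eq_zero_and_eq (hE1r : ∀ ω, E1 ω = 0 ∨ E1 ω = 1)
    (hDY1 : ∀ ω, DY1 ω = E1 ω * outcomeIfExposed (T ω) (A ω))
    (hS : ∀ t, outcomeIfExposed t a = S.indicator 1 t) :
    {ω | DY1 ω = 0 ∧ A ω = a} = {ω | A ω = a} \ (E1 ⁻¹' {1} ∩ T ⁻¹' S) := by
  ext ω
  by_cases hA : A ω = a
  · have hDY1ω := eqOn_dy1 hE1r hDY1 hS hA
    by_cases hG : ω ∈ E1 ⁻¹' {1} ∩ T ⁻¹' S <;> simp [hA, hG, hDY1ω]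
  · simp [hA]

lemma eqOn_dy2 (hB2r : ∀ ω, B2 ω = 0 ∨ B2 ω = 1) (hE2 : ∀ ω, E2 ω = (1 - DY1 ω) * B2 ω)
    (hDY2 : ∀ ω, DY2 ω = E2 ω * outcomeIfExposed (T ω) (A ω))
    (hS : ∀ t, outcomeIfExposed t a = S.indicator 1 t) :
    EqOn DY2 ((B2 ⁻¹' {1} ∩ T ⁻¹' S).indicator 1) {ω | DY1 ω = 0 ∧ A ω = a} :=
  eqOn_indicator_of_binary_mul_indicator hB2r fun ω ⟨h0, hA⟩ => by
    rw [hDY2, hE2, h0, hA, hS, sub_zero, one_mul]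

variable [MeasurableSpace Ω] {μ : Measure Ω} [IsProbabilityMeasure μ] {r q1 q2 : ℝ}

lemma measureReal_arm_inter_exposed_responder
    (hindep : iIndepFun ![A, T, E1, B2] μ) (hSm : MeasurableSet S)
    (hr : μ.real (T ⁻¹' S) = r) (hq1 : μ.real (E1 ⁻¹' {1}) = q1) :
    μ.real ({ω | A ω = a} ∩ (E1 ⁻¹' {1} ∩ T ⁻¹' S)) = μ.real {ω | A ω = a} * (q1 * r) := by
  have h := hindep.measureReal_inter_preimage_four (measurableSet_singleton a) hSm
    (measurableSet_singleton 1) MeasurableSet.univ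
  simp only [preimage_univ, inter_univ, probReal_univ, mul_one, hr, hq1] at h
  rw [← inter_assoc, inter_right_comm, ← mul_assoc, mul_right_comm _ q1]
  exact h

lemma integral_dy1_cond_arm (hindep : iIndepFun ![A, T, E1, B2] μ) (hAm : Measurable A)
    (hTm : Measurable T) (hE1m : Measurable E1) (hE1r : ∀ ω, E1 ω = 0 ∨ E1 ω = 1)
    (hDY1 : ∀ ω, DY1 ω = E1 ω * outcomeIfExposed (T ω) (A ω)) (hSm : MeasurableSet S)
    (hS : ∀ t, outcomeIfExposed t a = S.indicator 1 t) (hπ : μ.real {ω | A ω = a} ≠ 0)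
    (hr : μ.real (T ⁻¹' S) = r) (hq1 : μ.real (E1 ⁻¹' {1}) = q1) :
    ∫ ω, DY1 ω ∂μ[|{ω | A ω = a}] = q1 * r := by
  have hAa : MeasurableSet {ω | A ω = a} := hAm (measurableSet_singleton a)
  rw [integral_cond_eq_measureReal_inter_div hAa
    ((hE1m (measurableSet_singleton 1)).inter (hTm hSm)) (eqOn_dy1 hE1r hDY1 hS),
    measureReal_arm_inter_exposed_responder hindep hSm hr hq1, mul_div_cancel_left₀ _ hπ]

lemma integral_dy2_cond_eventFree_arm (hindep : iIndepFun ![A, T, E1, B2] μ)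
    (hAm : Measurable A) (hTm : Measurable T) (hE1m : Measurable E1) (hB2m : Measurable B2)
    (hE1r : ∀ ω, E1 ω = 0 ∨ E1 ω = 1) (hB2r : ∀ ω, B2 ω = 0 ∨ B2 ω = 1)
    (hDY1 : ∀ ω, DY1 ω = E1 ω * outcomeIfExposed (T ω) (A ω))
    (hE2 : ∀ ω, E2 ω = (1 - DY1 ω) * B2 ω)
    (hDY2 : ∀ ω, DY2 ω = E2 ω * outcomeIfExposed (T ω) (A ω)) (hSm : MeasurableSet S)
    (hS : ∀ t, outcomeIfExposed t a = S.indicator 1 t) (hπ : μ.real {ω | A ω = a} ≠ 0)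
    (hr : μ.real (T ⁻¹' S) = r) (hq1 : μ.real (E1 ⁻¹' {1}) = q1)
    (hq2 : μ.real (B2 ⁻¹' {1}) = q2) :
    ∫ ω, DY2 ω ∂μ[|{ω | DY1 ω = 0 ∧ A ω = a}] =
      r * ((1 - q1) * q2) / ((1 - r) * q1 + (1 - q1)) := by
  set π := μ.real {ω | A ω = a}
  have hAa : MeasurableSet {ω | A ω = a} := hAm (measurableSet_singleton a)
  have hG : MeasurableSet (E1 ⁻¹' {1} ∩ T ⁻¹' S) :=
    (hE1m (measurableSet_singleton 1)).inter (hTm hSm)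
  have hsurv := setOf_dy1_eq_zero_and_eq hE1r hDY1 hS
  have hsurv_meas : MeasurableSet {ω | DY1 ω = 0 ∧ A ω = a} := hsurv ▸ hAa.diff hG
  have hsurv_real : μ.real ({ω | A ω = a} \ (E1 ⁻¹' {1} ∩ T ⁻¹' S)) =
      π * ((1 - r) * q1 + (1 - q1)) := by
    have h := measureReal_inter_add_sdiff (μ := μ) (s := {ω | A ω = a}) hG
    rw [measureReal_arm_inter_exposed_responder hindep hSm hr hq1] at h
    linear_combination h
  have hevent : ({ω | A ω = a} \ (E1 ⁻¹' {1} ∩ T ⁻¹' S)) ∩ (B2 ⁻¹' {1} ∩ T ⁻¹' S) =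
      {ω | A ω = a} ∩ T ⁻¹' S ∩ E1 ⁻¹' {0} ∩ B2 ⁻¹' {1} := by
    ext ω
    rcases hE1r ω with h | h <;> simp [h] <;> tauto
  have hevent_real : μ.real ({ω | A ω = a} ∩ T ⁻¹' S ∩ E1 ⁻¹' {0} ∩ B2 ⁻¹' {1}) =
      π * (r * ((1 - q1) * q2)) := by
    have h := hindep.measureReal_inter_preimage_four (measurableSet_singleton a) hSm
      (measurableSet_singleton 0) (measurableSet_singleton 1)
    rw [measureReal_preimage_zero_eq_one_sub hE1m hE1r, hr, hq1, hq2] at h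
    rw [show π * (r * ((1 - q1) * q2)) = π * r * (1 - q1) * q2 by ring]
    exact h
  rw [integral_cond_eq_measureReal_inter_div hsurv_meas
    ((hB2m (measurableSet_singleton 1)).inter (hTm hSm)) (eqOn_dy2 hB2r hE2 hDY2 hS), hsurv,
    hevent, hevent_real, hsurv_real, mul_div_mul_left _ _ hπ]

end Arm

theorem hazard_ratio_time_two_explicit_model_general
    {Ω : Type*} [MeasurableSpace Ω] (μ : Measure Ω) [IsProbabilityMeasure μ]
    (A T E1 B2 DY1 E2 DY2 : Ω → ℝ)
    (hAm : Measurable A) (hTm : Measurable T) (hE1m : Measurable E1) (hB2m : Measurable B2)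
    (piA pd ph pr q1 q2 : ℝ)
    -- mutual independence of A, T, E1, B2
    (hindep : iIndepFun (m := fun _ : Fin 4 => (inferInstance : MeasurableSpace ℝ))
      ![A, T, E1, B2] μ)
    -- ranges
    (hAr : ∀ ω, A ω = 0 ∨ A ω = 1)
    (hE1r : ∀ ω, E1 ω = 0 ∨ E1 ω = 1)
    (hB2r : ∀ ω, B2 ω = 0 ∨ B2 ω = 1)
    -- marginal distributions
    (hA1 : (μ {ω | A ω = 1}).toReal = piA)
    (hT1 : (μ {ω | T ω = 1}).toReal = pd)
    (hT2 : (μ {ω | T ω = 2}).toReal = ph)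
    (hT3 : (μ {ω | T ω = 3}).toReal = pr)
    (hE11 : (μ {ω | E1 ω = 1}).toReal = q1)
    (hB21 : (μ {ω | B2 ω = 1}).toReal = q2)
    -- structural equations
    (hDY1 : ∀ ω, DY1 ω = E1 ω *
      ((if T ω = 1 then 1 else 0) + (1 - A ω) * (if T ω = 2 then 1 else 0) +
        A ω * (if T ω = 3 then 1 else 0)))
    (hE2 : ∀ ω, E2 ω = (1 - DY1 ω) * B2 ω)
    (hDY2 : ∀ ω, DY2 ω = E2 ω *
      ((if T ω = 1 then 1 else 0) + (1 - A ω) * (if T ω = 2 then 1 else 0) +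
        A ω * (if T ω = 3 then 1 else 0)))
    -- parameter constraints
    (hq1pos : 0 < q1) (hq1lt : q1 < 1) (hq2pos : 0 < q2)
    (hpiApos : 0 < piA) (hpiAlt : piA < 1)
    :
    (∫ ω, DY1 ω ∂(μ[|{ω | A ω = 1}])) / (∫ ω, DY1 ω ∂(μ[|{ω | A ω = 0}])) =
      (pd + pr) / (pd + ph) ∧
    (∫ ω, DY2 ω ∂(μ[|{ω | DY1 ω = 0 ∧ A ω = 1}])) /
        (∫ ω, DY2 ω ∂(μ[|{ω | DY1 ω = 0 ∧ A ω = 0}])) =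
      ((pd + pr) / (pd + ph)) *
        (((1 - (pd + ph)) * q1 + (1 - q1)) / ((1 - (pd + pr)) * q1 + (1 - q1))) := by
  have hS₁ : MeasurableSet ({1, 3} : Set ℝ) := (measurableSet_singleton 3).insert 1
  have hS₀ : MeasurableSet ({1, 2} : Set ℝ) := (measurableSet_singleton 2).insert 1
  have hr₁ : μ.real (T ⁻¹' {1, 3}) = pd + pr :=
    (measureReal_preimage_pair hTm (by norm_num)).trans (congrArg₂ (· + ·) hT1 hT3)
  have hr₀ : μ.real (T ⁻¹' {1, 2}) = pd + ph :=
    (measureReal_preimage_pair hTm (by norm_num)).trans (congrArg₂ (· + ·) hT1 hT2)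
  have hπ₁ : μ.real {ω | A ω = 1} ≠ 0 := hA1.trans_ne hpiApos.ne'
  have hπ₀ : μ.real {ω | A ω = 0} ≠ 0 :=
    ((measureReal_preimage_zero_eq_one_sub hAm hAr).trans (congrArg (1 - ·) hA1)).trans_ne
      (sub_ne_zero.2 hpiAlt.ne')
  constructor
  · rw [integral_dy1_cond_arm hindep hAm hTm hE1m hE1r hDY1 hS₁ outcomeIfExposed_one hπ₁ hr₁
        hE11,
      integral_dy1_cond_arm hindep hAm hTm hE1m hE1r hDY1 hS₀ outcomeIfExposed_zero hπ₀ hr₀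
        hE11]
    exact mul_div_mul_left _ _ hq1pos.ne'
  · rw [integral_dy2_cond_eventFree_arm hindep hAm hTm hE1m hB2m hE1r hB2r hDY1 hE2 hDY2 hS₁
        outcomeIfExposed_one hπ₁ hr₁ hE11 hB21,
      integral_dy2_cond_eventFree_arm hindep hAm hTm hE1m hB2m hE1r hB2r hDY1 hE2 hDY2 hS₀
        outcomeIfExposed_zero hπ₀ hr₀ hE11 hB21]
    exact mul_div_div_mul_div_eq_div_mul_div (mul_ne_zero (sub_ne_zero.2 hq1lt.ne') hq2pos.ne')

/-- Second-interval hazard ratio under the null in the explicit data-generating model. -/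
theorem hazard_ratio_time_two_explicit_model
    {Ω : Type*} [MeasurableSpace Ω] (μ : Measure Ω) [IsProbabilityMeasure μ]
    (A T E1 B2 DY1 E2 DY2 : Ω → ℝ)
    (hAm : Measurable A) (hTm : Measurable T) (hE1m : Measurable E1) (hB2m : Measurable B2)
    (piA pd ph pr pim q1 q2 : ℝ)
    -- mutual independence of A, T, E1, B2
    (hindep : iIndepFun (m := fun _ : Fin 4 => (inferInstance : MeasurableSpace ℝ))
      ![A, T, E1, B2] μ)
    -- ranges
    (hAr : ∀ ω, A ω = 0 ∨ A ω = 1)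
    (hTr : ∀ ω, T ω = 1 ∨ T ω = 2 ∨ T ω = 3 ∨ T ω = 4)
    (hE1r : ∀ ω, E1 ω = 0 ∨ E1 ω = 1)
    (hB2r : ∀ ω, B2 ω = 0 ∨ B2 ω = 1)
    -- marginal distributions
    (hA1 : (μ {ω | A ω = 1}).toReal = piA)
    (hT1 : (μ {ω | T ω = 1}).toReal = pd)
    (hT2 : (μ {ω | T ω = 2}).toReal = ph)
    (hT3 : (μ {ω | T ω = 3}).toReal = pr)
    (hT4 : (μ {ω | T ω = 4}).toReal = pim)
    (hE11 : (μ {ω | E1 ω = 1}).toReal = q1)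
    (hB21 : (μ {ω | B2 ω = 1}).toReal = q2)
    (hsumT : pd + ph + pr + pim = 1)
    -- structural equations
    (hDY1 : ∀ ω, DY1 ω = E1 ω *
      ((if T ω = 1 then 1 else 0) + (1 - A ω) * (if T ω = 2 then 1 else 0) +
        A ω * (if T ω = 3 then 1 else 0)))
    (hE2 : ∀ ω, E2 ω = (1 - DY1 ω) * B2 ω)
    (hDY2 : ∀ ω, DY2 ω = E2 ω *
      ((if T ω = 1 then 1 else 0) + (1 - A ω) * (if T ω = 2 then 1 else 0) +
        A ω * (if T ω = 3 then 1 else 0)))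
    -- parameter constraints
    (hq1pos : 0 < q1) (hq1lt : q1 < 1) (hq2pos : 0 < q2)
    (hpiApos : 0 < piA) (hpiAlt : piA < 1)
    (hphlt : pd + ph < 1) (hprlt : pd + pr < 1)
    (hphpos : 0 < pd + ph) (hprpos : 0 < pd + pr)
    :
    (∫ ω, DY1 ω ∂(μ[|{ω | A ω = 1}])) / (∫ ω, DY1 ω ∂(μ[|{ω | A ω = 0}])) =
      (pd + pr) / (pd + ph) ∧
    (∫ ω, DY2 ω ∂(μ[|{ω | DY1 ω = 0 ∧ A ω = 1}])) /
        (∫ ω, DY2 ω ∂(μ[|{ω | DY1 ω = 0 ∧ A ω = 0}])) =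
      ((pd + pr) / (pd + ph)) *
        (((1 - (pd + ph)) * q1 + (1 - q1)) / ((1 - (pd + pr)) * q1 + (1 - q1))) :=
  hazard_ratio_time_two_explicit_model_general μ A T E1 B2 DY1 E2 DY2 hAm hTm hE1m hB2m piA pd ph pr
    q1 q2 hindep hAr hE1r hB2r hA1 hT1 hT2 hT3 hE11 hB21 hDY1 hE2 hDY2 hq1pos hq1lt hq2pos hpiApos
    hpiAlt
end
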